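/- Let A, B ∈ ℝ^{n×n} be block matrices A = [A_{ij}] with blocks A_{ij} ∈ ℝ^{n_i×n_j}, and suppose there is a matrix A_N = [a_{ij}] ∈ ℝ^{m×m} with a_{ii} ≥ μ_i(A_{ii}) and a_{ij} ≥ ‖A_{ij}‖_{ij} for i ≠ j. Then μ_G(A) ≤ μ_N(A_N), where μ_G is the matrix measure induced by the global norm |v|_G := |(|v_1|_1,…,|v_m|_m)|_N built from local norms |·|_i and a monotone network norm |·|_N, and μ_N is the matrix measure induced by |·|_N. -/

import Mathlib

/-! For small `t > 0` the local measure bounds give `‖I + t A_ii‖_i ≤ 1 + t (a_ii + ε)`; with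
`‖A_ij‖_ij ≤ a_ij` and the triangle inequality this yields, row by row,
`|(v + t A v)_i|_i ≤ ((I + t A_N) u)_i + t ε u_i` for `u = (|v_1|_1, …, |v_m|_m)`.
Monotonicity of the network norm turns this into `‖I + t A‖_G ≤ ‖I + t A_N‖_N + t ε`;
subtract `1`, divide by `t`, let `t → 0⁺` and then `ε → 0`. -/

open Filter Topology

/-- A function `N` is a norm on a real vector space. -/
def IsNorm {E : Type*} [AddCommGroup E] [Module ℝ E] (N : E → ℝ) : Prop :=
  (∀ v, N v = 0 ↔ v = 0) ∧ (∀ (c : ℝ) (v : E), N (c • v) = |c| * N v) ∧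
    (∀ v w, N (v + w) ≤ N v + N w)

/-- Operator norm of a (possibly rectangular) matrix induced by norms on domain and codomain. -/
noncomputable def opNorm {n m : ℕ} (Nin : (Fin m → ℝ) → ℝ) (Nout : (Fin n → ℝ) → ℝ)
    (A : Matrix (Fin n) (Fin m) ℝ) : ℝ :=
  sSup {c | ∃ v, Nin v = 1 ∧ c = Nout (A.mulVec v)}

/-- `μ` is the matrix measure (logarithmic norm) induced by the norm `N` on `ℝ^n`. -/
def IsMatMeasure {n : ℕ} (N : (Fin n → ℝ) → ℝ) (μ : Matrix (Fin n) (Fin n) ℝ → ℝ) : Prop :=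
  ∀ A : Matrix (Fin n) (Fin n) ℝ,
    Tendsto (fun t : ℝ => (opNorm N N (1 + t • A) - 1) / t) (𝓝[>] 0) (𝓝 (μ A))


/-- Operator "norm" of a map on a vector space relative to a norm `G`. -/
noncomputable def mapOpNorm {E : Type*} (G : E → ℝ) (T : E → E) : ℝ :=
  sSup {c | ∃ v, G v = 1 ∧ c = G (T v)}

open Matrix

namespace IsNorm

section Module

variable {E : Type*} [AddCommGroup E] [Module ℝ E] {N : E → ℝ}

lemma map_zero (h : IsNorm N) : N 0 = 0 := (h.1 0).2 rfl

lemma map_neg (h : IsNorm N) (v : E) : N (-v) = N v := by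
  simpa using h.2.1 (-1) v

lemma nonneg (h : IsNorm N) (v : E) : 0 ≤ N v := by
  have := h.2.2 v (-v)
  rw [add_neg_cancel, h.map_zero, h.map_neg] at this
  linarith

lemma pos_of_ne_zero (h : IsNorm N) {v : E} (hv : v ≠ 0) : 0 < N v :=
  (h.nonneg v).lt_of_ne fun h0 => hv ((h.1 v).1 h0.symm)

lemma map_smul_of_nonneg (h : IsNorm N) {c : ℝ} (hc : 0 ≤ c) (v : E) :
    N (c • v) = c * N v := by
  rw [h.2.1, abs_of_nonneg hc]

lemma sum_le (h : IsNorm N) {ι : Type*} (s : Finset ι) (f : ι → E) :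
    N (∑ j ∈ s, f j) ≤ ∑ j ∈ s, N (f j) :=
  Finset.le_sum_of_subadditive N h.map_zero.le h.2.2 s f

lemma convexOn (h : IsNorm N) : ConvexOn ℝ Set.univ N := by
  refine ⟨convex_univ, fun x _ y _ a b ha hb _ => ?_⟩
  rw [smul_eq_mul, smul_eq_mul, ← h.map_smul_of_nonneg ha, ← h.map_smul_of_nonneg hb]
  exact h.2.2 _ _

end Module

section FiniteDimensional

variable {E : Type*} [NormedAddCommGroup E] [NormedSpace ℝ E] [FiniteDimensional ℝ E]
  {N : E → ℝ}

lemma continuous (h : IsNorm N) : Continuous N :=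
  continuousOn_univ.1 (h.convexOn.continuousOn isOpen_univ)

lemma exists_pos_mul_norm_le (h : IsNorm N) : ∃ c > 0, ∀ v, c * ‖v‖ ≤ N v := by
  rcases subsingleton_or_nontrivial E with hE | hE
  · exact ⟨1, one_pos, fun v => by simp [Subsingleton.elim v 0, h.map_zero]⟩
  obtain ⟨x, hx, hmin⟩ := (isCompact_sphere (0 : E) 1).exists_isMinOn
    (NormedSpace.sphere_nonempty.2 zero_le_one) h.continuous.continuousOn
  have hx1 : ‖x‖ = 1 := mem_sphere_zero_iff_norm.1 hx
  refine ⟨N x, h.pos_of_ne_zero (by rintro rfl; simp at hx1), fun v => ?_⟩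
  rcases eq_or_ne v 0 with rfl | hv
  · simp [h.map_zero]
  have hvn : 0 < ‖v‖ := norm_pos_iff.2 hv
  have hunit : ‖v‖⁻¹ • v ∈ Metric.sphere (0 : E) 1 := by
    rw [mem_sphere_zero_iff_norm, norm_smul, norm_inv, norm_norm, inv_mul_cancel₀ hvn.ne']
  have := hmin hunit
  rw [Set.mem_ofPred_eq, h.map_smul_of_nonneg (inv_nonneg.2 hvn.le)] at this
  calc N x * ‖v‖ ≤ ‖v‖⁻¹ * N v * ‖v‖ := by gcongr
    _ = N v := by field_simp

end FiniteDimensional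

end IsNorm

section OpNorm

variable {a b : ℕ} {Nin : (Fin a → ℝ) → ℝ} {Nout : (Fin b → ℝ) → ℝ}

lemma bddAbove_opNorm_set (hin : IsNorm Nin) (hout : IsNorm Nout)
    (A : Matrix (Fin b) (Fin a) ℝ) : BddAbove {c | ∃ v, Nin v = 1 ∧ c = Nout (A *ᵥ v)} := by
  obtain ⟨c, hc, hcN⟩ := hin.exists_pos_mul_norm_le
  have hcont : Continuous fun v => Nout (A *ᵥ v) :=
    hout.continuous.comp (continuous_const.matrix_mulVec continuous_id)
  refine ((isCompact_closedBall (0 : Fin a → ℝ) (1 / c)).image hcont).bddAbove.mono ?_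
  rintro _ ⟨v, hv, rfl⟩
  refine ⟨v, ?_, rfl⟩
  rw [mem_closedBall_zero_iff, le_div_iff₀' hc, ← hv]
  exact hcN v

lemma le_opNorm_mul (hin : IsNorm Nin) (hout : IsNorm Nout) (A : Matrix (Fin b) (Fin a) ℝ)
    (v : Fin a → ℝ) : Nout (A *ᵥ v) ≤ opNorm Nin Nout A * Nin v := by
  rcases eq_or_ne v 0 with rfl | hv
  · simp [hout.map_zero, hin.map_zero]
  have hpos := hin.pos_of_ne_zero hv
  have hunit : Nin ((Nin v)⁻¹ • v) = 1 := by
    rw [hin.map_smul_of_nonneg (inv_nonneg.2 hpos.le), inv_mul_cancel₀ hpos.ne']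
  have := le_csSup (bddAbove_opNorm_set hin hout A) ⟨_, hunit, rfl⟩
  rwa [Matrix.mulVec_smul, hout.map_smul_of_nonneg (inv_nonneg.2 hpos.le), inv_mul_le_iff₀ hpos,
    mul_comm] at this

lemma opNorm_nonneg (hout : IsNorm Nout) (A : Matrix (Fin b) (Fin a) ℝ) :
    0 ≤ opNorm Nin Nout A :=
  Real.sSup_nonneg (by rintro _ ⟨v, -, rfl⟩; exact hout.nonneg _)

end OpNorm

lemma one_add_smul_mulVec_apply {ι : Type*} [Fintype ι] [DecidableEq ι] (M : Matrix ι ι ℝ)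
    (t : ℝ) (u : ι → ℝ) (i : ι) :
    ((1 + t • M) *ᵥ u) i
      = (1 + t * M i i) * u i + t * ∑ j ∈ Finset.univ.erase i, M i j * u j := by
  rw [Matrix.add_mulVec, Matrix.one_mulVec, Matrix.smul_mulVec]
  simp only [Pi.add_apply, Pi.smul_apply, smul_eq_mul, Matrix.mulVec, dotProduct]
  rw [← Finset.add_sum_erase _ _ (Finset.mem_univ i)]
  ring

section Block

variable {m : ℕ} {n : Fin m → ℕ} {Nl : ∀ i, (Fin (n i) → ℝ) → ℝ}
  {Ab : ∀ i j : Fin m, Matrix (Fin (n i)) (Fin (n j)) ℝ}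

/-- The global norm `|v|_G = |(|v_1|_1, …, |v_m|_m)|_N`. -/
def globalNorm (NN : (Fin m → ℝ) → ℝ) (Nl : ∀ i, (Fin (n i) → ℝ) → ℝ)
    (v : ∀ i, Fin (n i) → ℝ) : ℝ :=
  NN fun i => Nl i (v i)

def blockMulVec (Ab : ∀ i j : Fin m, Matrix (Fin (n i)) (Fin (n j)) ℝ)
    (v : ∀ i, Fin (n i) → ℝ) : ∀ i, Fin (n i) → ℝ :=
  fun i => ∑ j, Ab i j *ᵥ v j

lemma localNorm_add_smul_blockMulVec_le (hNl : ∀ i, IsNorm (Nl i)) {t δ : ℝ} (ht : 0 ≤ t)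
    {B : Matrix (Fin m) (Fin m) ℝ} (i : Fin m)
    (hdiag : opNorm (Nl i) (Nl i) (1 + t • Ab i i) ≤ 1 + t * B i i + δ)
    (hoff : ∀ j, i ≠ j → opNorm (Nl j) (Nl i) (Ab i j) ≤ B i j)
    (v : ∀ i, Fin (n i) → ℝ) :
    Nl i (v i + t • blockMulVec Ab v i)
      ≤ ((1 + t • B) *ᵥ fun j => Nl j (v j)) i + δ * Nl i (v i) := by
  have hsplit : v i + t • blockMulVec Ab v i
      = (1 + t • Ab i i) *ᵥ v i + t • ∑ j ∈ Finset.univ.erase i, Ab i j *ᵥ v j := by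
    rw [blockMulVec, ← Finset.add_sum_erase _ _ (Finset.mem_univ i), smul_add, Matrix.add_mulVec,
      Matrix.one_mulVec, Matrix.smul_mulVec, add_assoc]
  have hdiagBlock : Nl i ((1 + t • Ab i i) *ᵥ v i) ≤ (1 + t * B i i + δ) * Nl i (v i) :=
    (le_opNorm_mul (hNl i) (hNl i) _ _).trans
      (mul_le_mul_of_nonneg_right hdiag ((hNl i).nonneg _))
  have hoffBlocks : Nl i (t • ∑ j ∈ Finset.univ.erase i, Ab i j *ᵥ v j)
      ≤ t * ∑ j ∈ Finset.univ.erase i, B i j * Nl j (v j) := by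
    rw [(hNl i).map_smul_of_nonneg ht]
    refine mul_le_mul_of_nonneg_left (((hNl i).sum_le _ _).trans
      (Finset.sum_le_sum fun j hj => ?_)) ht
    exact (le_opNorm_mul (hNl j) (hNl i) _ _).trans
      (mul_le_mul_of_nonneg_right (hoff j (Finset.ne_of_mem_erase hj).symm) ((hNl j).nonneg _))
  rw [hsplit, one_add_smul_mulVec_apply]
  linarith [(hNl i).2.2 ((1 + t • Ab i i) *ᵥ v i)
    (t • ∑ j ∈ Finset.univ.erase i, Ab i j *ᵥ v j)]

theorem mapOpNorm_globalNorm_le (hNl : ∀ i, IsNorm (Nl i)) {NN : (Fin m → ℝ) → ℝ}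
    (hNN : IsNorm NN) (hmono : ∀ v w : Fin m → ℝ, 0 ≤ w → w ≤ v → NN w ≤ NN v)
    {t δ : ℝ} (ht : 0 ≤ t) (hδ : 0 ≤ δ) {B : Matrix (Fin m) (Fin m) ℝ}
    (hdiag : ∀ i, opNorm (Nl i) (Nl i) (1 + t • Ab i i) ≤ 1 + t * B i i + δ)
    (hoff : ∀ i j, i ≠ j → opNorm (Nl j) (Nl i) (Ab i j) ≤ B i j) :
    mapOpNorm (globalNorm NN Nl) (fun v => v + t • blockMulVec Ab v)
      ≤ opNorm NN NN (1 + t • B) + δ := by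
  refine Real.sSup_le ?_ (add_nonneg (opNorm_nonneg hNN _) hδ)
  rintro _ ⟨v, hv, rfl⟩
  set u : Fin m → ℝ := fun i => Nl i (v i)
  have hu : NN u = 1 := hv
  have hbound := le_opNorm_mul hNN hNN (1 + t • B) u
  calc globalNorm NN Nl (v + t • blockMulVec Ab v)
      ≤ NN ((1 + t • B) *ᵥ u + δ • u) :=
        hmono _ _ (fun i => (hNl i).nonneg _) fun i =>
          localNorm_add_smul_blockMulVec_le hNl ht i (hdiag i) (hoff i) v
    _ ≤ NN ((1 + t • B) *ᵥ u) + δ * NN u := by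
        rw [← hNN.map_smul_of_nonneg hδ]
        exact hNN.2.2 _ _
    _ ≤ opNorm NN NN (1 + t • B) + δ := by
        rw [hu] at hbound ⊢
        linarith

end Block

/-- The matrix measure of a block matrix w.r.t. the global norm is bounded by the
matrix measure of the interconnection matrix w.r.t. the network norm. -/
theorem global_measure_le_network_measure {m : ℕ} (n : Fin m → ℕ)
    (Nl : ∀ i, (Fin (n i) → ℝ) → ℝ) (hNl : ∀ i, IsNorm (Nl i))
    (NN : (Fin m → ℝ) → ℝ) (hNN : IsNorm NN)
    (hmono : ∀ v w : Fin m → ℝ, 0 ≤ w → w ≤ v → NN w ≤ NN v)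
    (μl : ∀ i, Matrix (Fin (n i)) (Fin (n i)) ℝ → ℝ)
    (hμl : ∀ i, IsMatMeasure (Nl i) (μl i))
    (μN : Matrix (Fin m) (Fin m) ℝ → ℝ) (hμN : IsMatMeasure NN μN)
    (Ab : ∀ i j : Fin m, Matrix (Fin (n i)) (Fin (n j)) ℝ)
    (AN : Matrix (Fin m) (Fin m) ℝ)
    (hdiag : ∀ i, μl i (Ab i i) ≤ AN i i)
    (hoff : ∀ i j, i ≠ j → opNorm (Nl j) (Nl i) (Ab i j) ≤ AN i j)
    (μG : ℝ)
    (hμG : Tendsto (fun t : ℝ =>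
        (mapOpNorm (fun v : (∀ i, Fin (n i) → ℝ) => NN (fun i => Nl i (v i)))
          (fun v => v + t • fun i => ∑ j, (Ab i j).mulVec (v j)) - 1) / t)
      (𝓝[>] 0) (𝓝 μG)) :
    μG ≤ μN AN := by
  refine le_of_forall_pos_le_add fun ε hε => ?_
  have hlocal : ∀ᶠ t in 𝓝[>] (0 : ℝ), ∀ i,
      (opNorm (Nl i) (Nl i) (1 + t • Ab i i) - 1) / t < AN i i + ε :=
    eventually_all.2 fun i => (hμl i (Ab i i)).eventually_lt_const (by linarith [hdiag i])
  have hquotient : ∀ᶠ t in 𝓝[>] (0 : ℝ),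
      (mapOpNorm (globalNorm NN Nl) (fun v => v + t • blockMulVec Ab v) - 1) / t
        ≤ (opNorm NN NN (1 + t • AN) - 1) / t + ε := by
    filter_upwards [hlocal, self_mem_nhdsWithin] with t hlocal_t (ht : 0 < t)
    have hstep := mapOpNorm_globalNorm_le hNl hNN hmono ht.le (mul_nonneg ht.le hε.le)
      (fun i => by linarith [(div_lt_iff₀ ht).1 (hlocal_t i)]) hoff
    rw [div_add' _ _ _ ht.ne', div_le_div_iff_of_pos_right ht]
    linarith
  exact le_of_tendsto_of_tendsto hμG ((hμN AN).add_const ε) hquotient
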